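/- arXiv:0908.3687 — 6 statements merged into one kernel-verified Lean document; each statement's English description precedes it below -/
import Mathlib

section
/- Let Φ : X ⇒ Y be a multi-map (a relation Φ ⊆ X × Y) between metric spaces with Φ⁻¹(Y) = X (i.e., Φ(x) ≠ ∅ for all x). If δ ≥ 0 and ε ≥ ω_Φ(δ), where ω_Φ(δ) = sup{diam Φ(A) : A ⊆ X, diam A ≤ δ}, then for every x ∈ X and every y ∈ Φ(x), the image Φ(C_δ(x)) is contained in the ε-connected component C_ε(y). -/
/-! A chain `x = a₀, …, aₙ` of `δ`-steps in `X`, together with a choice of `yᵢ ∈ Φ(aᵢ)`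
starting at `y₀ = y`, gives a chain of `ε`-steps in `Y`: each `{aᵢ, aᵢ₊₁}` has diameter
at most `δ`, so `{yᵢ, yᵢ₊₁} ⊆ Φ({aᵢ, aᵢ₊₁})` has diameter at most `ε`. -/

/-- The `s`-connected component of `x`. -/
def chainComp {X : Type*} [MetricSpace X] (s : ℝ) (x : X) : Set X :=
  {y | Relation.ReflTransGen (fun a b => dist a b ≤ s) x y}

/-- The image of a set under a multi-map `Φ ⊆ X × Y`. -/
def mImage {X Y : Type*} (Φ : Set (X × Y)) (A : Set X) : Set Y :=
  {y | ∃ a ∈ A, (a, y) ∈ Φ}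

theorem mem_chainComp_of_edist_le {Y : Type*} [MetricSpace Y] {ε : ℝ} {y z w : Y}
    (hz : z ∈ chainComp ε y) (hzw : edist z w ≤ ENNReal.ofReal ε) : w ∈ chainComp ε y := by
  rw [edist_dist, ENNReal.ofReal_le_ofReal_iff'] at hzw
  rcases hzw with hle | hzero
  · exact hz.tail hle
  · rwa [← dist_le_zero.mp hzero]

theorem edist_le_of_ediam_mImage_le {X Y : Type*} [MetricSpace X] [MetricSpace Y]
    {Φ : Set (X × Y)} {δ ε : ℝ}
    (hosc : ∀ A : Set X, Metric.ediam A ≤ ENNReal.ofReal δ →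
      Metric.ediam (mImage Φ A) ≤ ENNReal.ofReal ε)
    {a b : X} {y z : Y} (hab : edist a b ≤ ENNReal.ofReal δ) (hay : (a, y) ∈ Φ)
    (hbz : (b, z) ∈ Φ) : edist y z ≤ ENNReal.ofReal ε :=
  calc edist y z ≤ Metric.ediam (mImage Φ {a, b}) :=
        Metric.edist_le_ediam_of_mem ⟨a, .inl rfl, hay⟩ ⟨b, .inr rfl, hbz⟩
    _ ≤ ENNReal.ofReal ε := hosc _ (by rwa [Metric.ediam_pair])

theorem multiMap_image_component_subset_general {X Y : Type*} [MetricSpace X] [MetricSpace Y]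
    (Φ : Set (X × Y)) (hdom : ∀ x : X, ∃ y : Y, (x, y) ∈ Φ)
    (δ ε : ℝ)
    (hosc : ∀ A : Set X, EMetric.diam A ≤ ENNReal.ofReal δ →
      EMetric.diam (mImage Φ A) ≤ ENNReal.ofReal ε)
    (x : X) (y : Y) (hy : (x, y) ∈ Φ) :
    mImage Φ (chainComp δ x) ⊆ chainComp ε y := by
  rintro y' ⟨a, hxa, hay'⟩
  induction (hxa : Relation.ReflTransGen _ x a) generalizing y' with
  | refl =>
    exact mem_chainComp_of_edist_le .refl
      (edist_le_of_ediam_mImage_le hosc (by simp) hy hay')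
  | @tail b c _ hbc ih =>
    obtain ⟨z, hbz⟩ := hdom b
    have hbc_edist : edist b c ≤ ENNReal.ofReal δ := by
      rw [edist_dist]
      exact ENNReal.ofReal_le_ofReal hbc
    exact mem_chainComp_of_edist_le (ih hbz) (edist_le_of_ediam_mImage_le hosc hbc_edist hbz hay')

/-- Lemma 1: if `Φ : X ⇒ Y` is a multi-map with `Φ⁻¹(Y) = X`, `δ ≥ 0` and
`ε ≥ ω_Φ(δ)` (expressed by: every set of diameter at most `δ` has image of diameter
at most `ε`), then for every `x` and every `y ∈ Φ(x)`, the image of the `δ`-connected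
component of `x` lies in the `ε`-connected component of `y`. -/
theorem multiMap_image_component_subset {X Y : Type*} [MetricSpace X] [MetricSpace Y]
    (Φ : Set (X × Y)) (hdom : ∀ x : X, ∃ y : Y, (x, y) ∈ Φ)
    (δ ε : ℝ) (hδ : 0 ≤ δ)
    (hosc : ∀ A : Set X, EMetric.diam A ≤ ENNReal.ofReal δ →
      EMetric.diam (mImage Φ A) ≤ ENNReal.ofReal ε)
    (x : X) (y : Y) (hy : (x, y) ∈ Φ) :
    mImage Φ (chainComp δ x) ⊆ chainComp ε y :=
  multiMap_image_component_subset_general Φ hdom δ ε hosc x y hy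
end

section
/- Let Φ : X ⇒ Y be a multi-map between metric spaces with Φ(X) = Y and Φ⁻¹(Y) = X. Suppose 0 < δ < ε and 0 < δ' < ε' are real numbers with ε' ≥ ω_Φ(ε) and δ ≥ ω_{Φ⁻¹}(δ'). Then Θ_δ^ε(X) ≤ Θ_{δ'}^{ε'}(Y), where Θ_δ^ε(X) = sup over x ∈ X of the number of δ-connected components of X contained in the ε-connected component of x. -/
open Cardinal

universe u v

/-- `Θ_δ^ε(X)`: the supremum over `x ∈ X` of the number of `δ`-connected components
composing the `ε`-connected component of `x`. -/
noncomputable def Theta (X : Type*) [MetricSpace X] (δ ε : ℝ) : Cardinal :=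
  ⨆ x : X, #{C : Set X // ∃ y ∈ chainComp ε x, C = chainComp δ y}

/-!
Fix a selection `g` of `Φ`. Since `ω_Φ(ε) ≤ ε'`, every `ε`-chain is sent by `Φ` to an
`ε'`-chain (the intermediate points have images because `Φ` is defined everywhere), so `g` maps
`C_ε(x)` into `C_{ε'}(g x)`. Since `ω_{Φ⁻¹}(δ') ≤ δ`, a `δ'`-chain from `g z₁` to `g z₂` pulls
back to a `δ`-chain from `z₁` to `z₂`, so `g` sends distinct `δ`-components to distinct
`δ'`-components. Choosing a point in each `δ`-component of `C_ε(x)` thus injects these components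
into the `δ'`-components of `C_{ε'}(g x)`.
-/

section ChainComp

variable {X : Type*} [MetricSpace X] {s : ℝ}

lemma mem_chainComp_self (s : ℝ) (x : X) : x ∈ chainComp s x :=
  Relation.ReflTransGen.refl

lemma mem_chainComp_comm {x y : X} (h : y ∈ chainComp s x) : x ∈ chainComp s y := by
  have : Std.Symm fun a b : X => dist a b ≤ s := ⟨fun a b hab => (dist_comm b a).le.trans hab⟩
  exact Std.Symm.symm _ _ h

lemma chainComp_eq_of_mem {x y : X} (h : y ∈ chainComp s x) : chainComp s x = chainComp s y :=
  Set.ext fun _ => ⟨(mem_chainComp_comm h).trans, h.trans⟩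

lemma mem_chainComp_of_edist_le_s4 {x y : X} (h : edist x y ≤ ENNReal.ofReal s) :
    y ∈ chainComp s x := by
  rcases le_or_gt 0 s with hs | hs
  · exact .single ((edist_le_ofReal hs).mp h)
  · rw [ENNReal.ofReal_of_nonpos hs.le, nonpos_iff_eq_zero, edist_eq_zero] at h
    exact h ▸ mem_chainComp_self s x

end ChainComp

section Oscillation

variable {X Y : Type*}

/-- `ω_Φ(ρ) ≤ ρ'`, where `ω_Φ` is the oscillation of the multi-map `Φ`. -/
def OscillationLE [PseudoEMetricSpace X] [PseudoEMetricSpace Y] (Φ : Set (X × Y))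
    (ρ ρ' : ℝ) : Prop :=
  ∀ A : Set X, Metric.ediam A ≤ ENNReal.ofReal ρ → Metric.ediam (mImage Φ A) ≤ ENNReal.ofReal ρ'

lemma OscillationLE.edist_le [PseudoEMetricSpace X] [PseudoEMetricSpace Y] {Φ : Set (X × Y)}
    {ρ ρ' : ℝ} (hΦ : OscillationLE Φ ρ ρ') {a b : X} (hab : edist a b ≤ ENNReal.ofReal ρ)
    {v w : Y} (hv : (a, v) ∈ Φ) (hw : (b, w) ∈ Φ) : edist v w ≤ ENNReal.ofReal ρ' :=
  (Metric.edist_le_ediam_of_mem (s := mImage Φ {a, b}) ⟨a, by simp, hv⟩ ⟨b, by simp, hw⟩).trans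
    (hΦ {a, b} (by rwa [Metric.ediam_pair]))

lemma OscillationLE.mem_chainComp [MetricSpace X] [MetricSpace Y] {Φ : Set (X × Y)}
    {ρ ρ' : ℝ} (hΦ : OscillationLE Φ ρ ρ') (hdom : ∀ x, ∃ y, (x, y) ∈ Φ) {x z : X}
    (hz : z ∈ chainComp ρ x) {y w : Y} (hy : (x, y) ∈ Φ) (hw : (z, w) ∈ Φ) :
    w ∈ chainComp ρ' y := by
  induction hz generalizing w with
  | refl => exact mem_chainComp_of_edist_le_s4 (hΦ.edist_le (by simp) hy hw)
  | tail _ hbc ih =>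
    obtain ⟨v, hv⟩ := hdom _
    have hbc' := ENNReal.ofReal_le_ofReal hbc
    rw [← edist_dist] at hbc'
    exact (ih hv).trans (mem_chainComp_of_edist_le_s4 (hΦ.edist_le hbc' hv hw))

end Oscillation

theorem lift_mk_chainComps_le_of_map {X : Type u} {Y : Type v} [MetricSpace X] [MetricSpace Y]
    {δ ε δ' ε' : ℝ} (g : X → Y) (x : X)
    (hε : ∀ z ∈ chainComp ε x, g z ∈ chainComp ε' (g x))
    (hδ : ∀ z₁ z₂, g z₂ ∈ chainComp δ' (g z₁) → z₂ ∈ chainComp δ z₁) :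
    lift.{v} #{C : Set X // ∃ z ∈ chainComp ε x, C = chainComp δ z} ≤
      lift.{u} #{D : Set Y // ∃ w ∈ chainComp ε' (g x), D = chainComp δ' w} := by
  choose rep hrep_mem hrep_eq using
    fun C : {C : Set X // ∃ z ∈ chainComp ε x, C = chainComp δ z} => C.2
  refine lift_mk_le'.mpr ⟨⟨fun C => ⟨_, g (rep C), hε _ (hrep_mem C), rfl⟩, fun C₁ C₂ h => ?_⟩⟩
  have hD : chainComp δ' (g (rep C₁)) = chainComp δ' (g (rep C₂)) := congrArg Subtype.val h
  have hg : g (rep C₂) ∈ chainComp δ' (g (rep C₁)) := hD ▸ mem_chainComp_self δ' (g (rep C₂))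
  exact Subtype.ext <| by rw [hrep_eq, hrep_eq, chainComp_eq_of_mem (hδ _ _ hg)]

theorem lift_Theta_le_of_map {X : Type u} {Y : Type v} [MetricSpace X] [MetricSpace Y]
    {δ ε δ' ε' : ℝ} (g : X → Y)
    (hε : ∀ x, ∀ z ∈ chainComp ε x, g z ∈ chainComp ε' (g x))
    (hδ : ∀ z₁ z₂, g z₂ ∈ chainComp δ' (g z₁) → z₂ ∈ chainComp δ z₁) :
    lift.{v} (Theta X δ ε) ≤ lift.{u} (Theta Y δ' ε') := by
  rw [Theta, lift_iSup bddAbove_of_small]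
  exact ciSup_le' fun x => (lift_mk_chainComps_le_of_map g x (hε x) hδ).trans
    (lift_le.mpr (le_ciSup bddAbove_of_small (g x)))

theorem Theta_le_of_multiMap_general {X : Type u} {Y : Type v} [MetricSpace X] [MetricSpace Y]
    (Φ : Set (X × Y))
    (hdom : ∀ x : X, ∃ y : Y, (x, y) ∈ Φ)
    (hsurj : ∀ y : Y, ∃ x : X, (x, y) ∈ Φ)
    (δ ε δ' ε' : ℝ)
    (hoscΦ : ∀ A : Set X, EMetric.diam A ≤ ENNReal.ofReal ε →
      EMetric.diam (mImage Φ A) ≤ ENNReal.ofReal ε')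
    (hoscΦinv : ∀ B : Set Y, EMetric.diam B ≤ ENNReal.ofReal δ' →
      EMetric.diam (mImage {p : Y × X | (p.2, p.1) ∈ Φ} B) ≤ ENNReal.ofReal δ) :
    Cardinal.lift.{v} (Theta X δ ε) ≤ Cardinal.lift.{u} (Theta Y δ' ε') := by
  choose g hg using hdom
  refine lift_Theta_le_of_map g (fun x z hz => ?_) (fun z₁ z₂ h => ?_)
  · exact OscillationLE.mem_chainComp hoscΦ (fun x => ⟨g x, hg x⟩) hz (hg x) (hg z)
  · exact OscillationLE.mem_chainComp (Φ := {p : Y × X | (p.2, p.1) ∈ Φ}) hoscΦinv hsurj h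
      (hg z₁) (hg z₂)

/-- Lemma 2: if `Φ : X ⇒ Y` is a surjective multi-map with `Φ⁻¹(Y) = X`,
`0 < δ < ε`, `0 < δ' < ε'`, `ε' ≥ ω_Φ(ε)` and `δ ≥ ω_{Φ⁻¹}(δ')`, then
`Θ_δ^ε(X) ≤ Θ_{δ'}^{ε'}(Y)`. -/
theorem Theta_le_of_multiMap {X : Type u} {Y : Type v} [MetricSpace X] [MetricSpace Y]
    (Φ : Set (X × Y))
    (hdom : ∀ x : X, ∃ y : Y, (x, y) ∈ Φ)
    (hsurj : ∀ y : Y, ∃ x : X, (x, y) ∈ Φ)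
    (δ ε δ' ε' : ℝ) (hδ : 0 < δ) (hδε : δ < ε) (hδ' : 0 < δ') (hδε' : δ' < ε')
    (hoscΦ : ∀ A : Set X, EMetric.diam A ≤ ENNReal.ofReal ε →
      EMetric.diam (mImage Φ A) ≤ ENNReal.ofReal ε')
    (hoscΦinv : ∀ B : Set Y, EMetric.diam B ≤ ENNReal.ofReal δ' →
      EMetric.diam (mImage {p : Y × X | (p.2, p.1) ∈ Φ} B) ≤ ENNReal.ofReal δ) :
    Cardinal.lift.{v} (Theta X δ ε) ≤ Cardinal.lift.{u} (Theta Y δ' ε') :=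
  Theta_le_of_multiMap_general Φ hdom hsurj δ ε δ' ε' hoscΦ hoscΦinv
end

section
/- If two metric spaces X and Y admit macro-uniform maps f : X → Y and g : Y → X with dist(g∘f, id_X) < ∞ and dist(f∘g, id_Y) < ∞ (i.e., X and Y are coarsely equivalent), then X and Y contain bi-uniformly equivalent large subspaces X' ⊆ X and Y' ⊆ Y. -/
/-- `f` is macro-uniform: for every finite `δ` the oscillation `ω_f(δ)` is finite. -/
def MacroUniform {X Y : Type*} [MetricSpace X] [MetricSpace Y] (f : X → Y) : Prop :=
  ∀ δ : ℝ, ∃ ε : ℝ, ∀ a b : X, dist a b ≤ δ → dist (f a) (f b) ≤ ε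

/-- If `X` and `Y` are coarsely equivalent (via macro-uniform maps `f`, `g` with
`dist(g∘f, id) < ∞` and `dist(f∘g, id) < ∞`), then `X` and `Y` contain bi-uniformly
equivalent large subspaces `X' ⊆ X`, `Y' ⊆ Y`. -/
theorem coarseEquiv_implies_biuniform_large_subspaces
    {X Y : Type*} [MetricSpace X] [MetricSpace Y]
    (f : X → Y) (g : Y → X) (hf : MacroUniform f) (hg : MacroUniform g)
    (hgf : ∃ C : ℝ, ∀ x : X, dist (g (f x)) x ≤ C)
    (hfg : ∃ C : ℝ, ∀ y : Y, dist (f (g y)) y ≤ C) :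
    ∃ (X' : Set X) (Y' : Set Y),
      (∃ r : ℝ, ∀ x : X, ∃ x' ∈ X', dist x x' ≤ r) ∧
      (∃ r : ℝ, ∀ y : Y, ∃ y' ∈ Y', dist y y' ≤ r) ∧
      ∃ h : X' → Y', Function.Bijective h ∧
        (∀ ε : ℝ, 0 < ε → ∃ δ : ℝ, 0 < δ ∧
          ∀ a b : X', dist (a : X) b ≤ δ → dist (h a : Y) (h b) ≤ ε) ∧
        (∀ δ : ℝ, ∃ ε : ℝ, ∀ a b : X', dist (a : X) b ≤ δ → dist (h a : Y) (h b) ≤ ε) ∧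
        (∀ ε : ℝ, 0 < ε → ∃ δ : ℝ, 0 < δ ∧
          ∀ a b : X', dist (h a : Y) (h b) ≤ δ → dist (a : X) b ≤ ε) ∧
        (∀ δ : ℝ, ∃ ε : ℝ, ∀ a b : X', dist (h a : Y) (h b) ≤ δ → dist (a : X) b ≤ ε) := by
  obtain ⟨C, hC⟩ := hgf
  obtain ⟨C', hC'⟩ := hfg
  obtain ⟨E, hE⟩ := hg 1
  set s : ℝ := max E 0 + 2 * |C| + 1 with hs_def
  have hs1 : (1 : ℝ) ≤ s := by
    have h1 : (0:ℝ) ≤ max E 0 := le_max_right _ _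
    have h2 : (0:ℝ) ≤ 2 * |C| := by positivity
    linarith
  have hs0 : (0 : ℝ) < s := lt_of_lt_of_le one_pos hs1
  -- key estimate: close images force closeness in X
  have key : ∀ a b : X, dist (f a) (f b) ≤ 1 → dist a b < s := by
    intro a b hab
    have h1 := hC a
    have h2 := hC b
    have h3 := hE (f a) (f b) hab
    have h4 : dist a b ≤ dist a (g (f a)) + dist (g (f a)) (g (f b)) + dist (g (f b)) b :=
      dist_triangle4 a (g (f a)) (g (f b)) b
    have h5 : dist a (g (f a)) = dist (g (f a)) a := dist_comm _ _
    have hCabs : C ≤ |C| := le_abs_self C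
    have hEmax : E ≤ max E 0 := le_max_left _ _
    rw [hs_def]
    rw [dist_comm a (g (f a))] at h4
    linarith
  -- maximal s-separated set
  have hchainok : ∀ c ⊆ {S : Set X | S.Pairwise fun a b => s ≤ dist a b},
      IsChain (· ⊆ ·) c → ∃ ub ∈ {S : Set X | S.Pairwise fun a b => s ≤ dist a b},
      ∀ t ∈ c, t ⊆ ub := by
    intro c hc hchain
    refine ⟨⋃₀ c, ?_, fun t ht => Set.subset_sUnion_of_mem ht⟩
    intro a ha b hb hab
    obtain ⟨ta, hta, haa⟩ := ha
    obtain ⟨tb, htb, hbb⟩ := hb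
    rcases hchain.total hta htb with hsub | hsub
    · exact hc htb (hsub haa) hbb hab
    · exact hc hta haa (hsub hbb) hab
  obtain ⟨X', hX'max⟩ := zorn_subset
      {S : Set X | S.Pairwise fun a b => s ≤ dist a b} hchainok
  obtain ⟨hX'sep, hX'm⟩ := hX'max
  -- X' is large
  have hlarge : ∀ x : X, ∃ x' ∈ X', dist x x' ≤ s := by
    intro x
    by_contra hcon
    push_neg at hcon
    have hxX' : x ∉ X' := fun hx => by
      have := hcon x hx; simp at this; linarith
    have hins : (insert x X') ∈ {S : Set X | S.Pairwise fun a b => s ≤ dist a b} := by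
      intro a ha b hb hab
      rcases ha with rfl | ha
      · rcases hb with rfl | hb
        · exact absurd rfl hab
        · exact le_of_lt (hcon b hb)
      · rcases hb with rfl | hb
        · rw [dist_comm]; exact le_of_lt (hcon a ha)
        · exact hX'sep ha hb hab
    have := hX'm hins (Set.subset_insert x X')
    exact hxX' (this (Set.mem_insert x X'))
  -- f is injective on X'
  have hinj : ∀ a ∈ X', ∀ b ∈ X', f a = f b → a = b := by
    intro a ha b hb hfab
    by_contra hne
    have := hX'sep ha hb hne
    have : dist a b < s := key a b (by rw [hfab]; simp)
    have := hX'sep ha hb hne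
    linarith
  refine ⟨X', f '' X', ⟨s, hlarge⟩, ?_, ?_⟩
  · -- Y' large
    obtain ⟨F, hF⟩ := hf s
    refine ⟨C' + F, fun y => ?_⟩
    obtain ⟨x', hx', hdx⟩ := hlarge (g y)
    refine ⟨f x', ⟨x', hx', rfl⟩, ?_⟩
    have h1 := hC' y
    have h2 := hF (g y) x' hdx
    calc dist y (f x') ≤ dist y (f (g y)) + dist (f (g y)) (f x') := dist_triangle _ _ _
      _ ≤ C' + F := by rw [dist_comm y] ; exact add_le_add h1 h2
  · refine ⟨fun x => ⟨f x.1, ⟨x.1, x.2, rfl⟩⟩, ⟨?_, ?_⟩, ?_, ?_, ?_, ?_⟩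
    · intro a b hab
      exact Subtype.ext (hinj a.1 a.2 b.1 b.2 (congrArg Subtype.val hab))
    · rintro ⟨y, x, hx, rfl⟩
      exact ⟨⟨x, hx⟩, rfl⟩
    · intro ε hε
      refine ⟨s / 2, by linarith, fun a b hab => ?_⟩
      have : (a : X) = b := by
        by_contra hne
        have := hX'sep a.2 b.2 (fun h => hne (by exact_mod_cast h))
        linarith
      simp [this]
      linarith
    · intro δ
      obtain ⟨ε, hεf⟩ := hf δ
      exact ⟨ε, fun a b hab => hεf a.1 b.1 hab⟩
    · intro ε hε
      refine ⟨1, one_pos, fun a b hab => ?_⟩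
      have hlt := key a.1 b.1 hab
      have : (a : X) = b := by
        by_contra hne
        have := hX'sep a.2 b.2 (fun h => hne (by exact_mod_cast h))
        linarith
      simp [this]
      linarith
    · intro δ
      obtain ⟨ε, hεg⟩ := hg δ
      refine ⟨ε + 2 * C, fun a b hab => ?_⟩
      have h1 := hC a.1
      have h2 := hC b.1
      have h3 := hεg (f a.1) (f b.1) hab
      calc dist (a:X) b ≤ dist (a:X) (g (f a.1)) + dist (g (f a.1)) (g (f b.1)) +
            dist (g (f b.1)) (b:X) := dist_triangle4 _ _ _ _
        _ ≤ C + ε + C := by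
            rw [dist_comm (a:X)]; exact add_le_add (add_le_add h1 h3) h2
        _ ≤ ε + 2 * C := by linarith
end

section
/- Let X be an isometrically homogeneous metric space and L a level set. Then the canonical L-tower T_X^L of X is homogeneous: for any two elements at the same level and any lower level ℓ, they have the same number of predecessors at level ℓ. Concretely, for any x, y ∈ X and λ ∈ L, ℓ ∈ L with ℓ ≤ λ, the number of ℓ-connected components contained in C_λ(x) equals the number contained in C_λ(y). -/
open Cardinal Set

/-- `C_λ(x)/𝒞_ℓ(X)` in the paper's notation. -/
def chainCompsIn {X : Type*} [MetricSpace X] (lam ell : ℝ) (x : X) : Set (Set X) :=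
  {C | ∃ z ∈ chainComp lam x, C = chainComp ell z}

section

universe u v

variable {X : Type u} {Y : Type v} [MetricSpace X] [MetricSpace Y]

theorem Isometry.mapsTo_chainComp {f : X → Y} (hf : Isometry f) (s : ℝ) (z : X) :
    MapsTo f (chainComp s z) (chainComp s (f z)) := fun _ hw =>
  Relation.ReflTransGen.lift f (fun a b hab => (hf.dist_eq a b).trans_le hab) _ _ hw

namespace IsometryEquiv

theorem image_chainComp (e : X ≃ᵢ Y) (s : ℝ) (z : X) :
    e '' chainComp s z = chainComp s (e z) := by
  refine (e.isometry.mapsTo_chainComp s z).image_subset.antisymm fun w hw => ?_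
  refine ⟨e.symm w, ?_, e.apply_symm_apply w⟩
  simpa using e.symm.isometry.mapsTo_chainComp s (e z) hw

theorem image_chainCompsIn (e : X ≃ᵢ Y) (lam ell : ℝ) (x : X) :
    image e '' chainCompsIn lam ell x = chainCompsIn lam ell (e x) := by
  ext C
  constructor
  · rintro ⟨_, ⟨z, hz, rfl⟩, rfl⟩
    exact ⟨e z, e.isometry.mapsTo_chainComp lam x hz, e.image_chainComp ell z⟩
  · rintro ⟨z, hz, rfl⟩
    have hz' : e.symm z ∈ chainComp lam x := by
      simpa using e.symm.isometry.mapsTo_chainComp lam (e x) hz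
    exact ⟨_, ⟨e.symm z, hz', rfl⟩, by rw [e.image_chainComp, e.apply_symm_apply]⟩

theorem lift_mk_chainCompsIn (e : X ≃ᵢ Y) (lam ell : ℝ) (x : X) :
    lift.{u} #(chainCompsIn lam ell (e x)) = lift.{v} #(chainCompsIn lam ell x) := by
  rw [← e.image_chainCompsIn, mk_image_eq_lift _ _ (image_injective.2 e.injective)]

end IsometryEquiv

end

theorem canonTower_homogeneous_general {X : Type*} [MetricSpace X]
    (hhom : ∀ x y : X, ∃ f : X → X, Function.Bijective f ∧ Isometry f ∧ f x = y)
    (x y : X) (lam ell : ℝ) :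
    Cardinal.mk {C : Set X // ∃ z ∈ chainComp lam x, C = chainComp ell z} =
      Cardinal.mk {C : Set X // ∃ z ∈ chainComp lam y, C = chainComp ell z} := by
  obtain ⟨f, hbij, hiso, rfl⟩ := hhom x y
  let e : X ≃ᵢ X := ⟨Equiv.ofBijective f hbij, hiso⟩
  have h := e.lift_mk_chainCompsIn lam ell x
  rw [lift_id, lift_id] at h
  exact h.symm

/-- If `X` is an isometrically homogeneous metric space and `L` is a level set, the
canonical `L`-tower of `X` is homogeneous: for any `x, y ∈ X` and levels `ℓ ≤ λ` in
`L`, the number of `ℓ`-connected components contained in `C_λ(x)` equals the number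
of `ℓ`-connected components contained in `C_λ(y)`. -/
theorem canonTower_homogeneous {X : Type*} [MetricSpace X] (L : Set ℝ)
    (hhom : ∀ x y : X, ∃ f : X → X, Function.Bijective f ∧ Isometry f ∧ f x = y)
    (x y : X) (lam ell : ℝ) (hlam : lam ∈ L) (hell : ell ∈ L) (hle : ell ≤ lam) :
    Cardinal.mk {C : Set X // ∃ z ∈ chainComp lam x, C = chainComp ell z} =
      Cardinal.mk {C : Set X // ∃ z ∈ chainComp lam y, C = chainComp ell z} :=
  canonTower_homogeneous_general hhom x y lam ell
end

section
/- Let X be a metric space, L a level set, and C_L : X → ∂T_X^L the canonical map x ↦ {(C_λ(x), λ) : λ ∈ L}. Then for all x, y ∈ X, the distance ρ(C_L(x), C_L(y)) in the boundary (with the canonical ultrametric induced by the identity scaling function) satisfies ρ(C_L(x), C_L(y)) ≤ inf{λ ∈ L : λ ≥ d(x,y)}. Consequently C_L is macro-uniform. -/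
open scoped Classical

/-- The canonical ultrametric distance between the branches `C_L(x)` and `C_L(y)` of
the canonical `L`-tower: `0` if the branches coincide, and otherwise the level of the
minimum of their intersection, i.e. the infimum of levels `λ ∈ L` at which the
`λ`-components of `x` and `y` coincide. -/
noncomputable def canonDist {X : Type*} [MetricSpace X] (L : Set ℝ) (x y : X) : ℝ :=
  if ∀ l ∈ L, chainComp l x = chainComp l y then 0
  else sInf {l | l ∈ L ∧ chainComp l x = chainComp l y}


lemma chainComp_eq_of_dist_le {X : Type*} [MetricSpace X] {s : ℝ} {x y : X}
    (h : dist x y ≤ s) : chainComp s x = chainComp s y := by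
  ext z
  simp only [chainComp, Set.mem_setOf_eq]
  constructor
  · intro hz
    exact Relation.ReflTransGen.head (show dist y x ≤ s by rwa [dist_comm]) hz
  · intro hz
    exact Relation.ReflTransGen.head h hz

/-- For all `x, y ∈ X`, the canonical distance of the branches `C_L(x)`, `C_L(y)` in
`∂T_X^L` is at most `inf {λ ∈ L : λ ≥ d(x,y)}`; consequently the canonical map
`C_L : X → ∂T_X^L` is macro-uniform. -/
theorem canonMap_dist_le_and_macroUniform {X : Type*} [MetricSpace X] (L : Set ℝ)
    (hLpos : ∀ l ∈ L, 0 < l)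
    (hLsup : ∀ r : ℝ, ∃ l ∈ L, r ≤ l)
    (hLicc : ∀ a ∈ L, ∀ b ∈ L, (L ∩ Set.Icc a b).Finite)
    (hLinf : (∃ a ∈ L, (L ∩ Set.Iic a).Infinite) → ∀ ε : ℝ, 0 < ε → ∃ l ∈ L, l ≤ ε) :
    (∀ x y : X, canonDist L x y ≤ sInf {l | l ∈ L ∧ dist x y ≤ l}) ∧
    (∀ δ : ℝ, ∃ ε : ℝ, ∀ x y : X, dist x y ≤ δ → canonDist L x y ≤ ε) := by
  have key : ∀ x y : X, canonDist L x y ≤ sInf {l | l ∈ L ∧ dist x y ≤ l} := by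
    intro x y
    have hSne : {l | l ∈ L ∧ dist x y ≤ l}.Nonempty := by
      obtain ⟨l, hl, hle⟩ := hLsup (dist x y)
      exact ⟨l, hl, hle⟩
    have hSpos : (0:ℝ) ≤ sInf {l | l ∈ L ∧ dist x y ≤ l} :=
      le_csInf hSne (fun l hl => (hLpos _ hl.1).le)
    unfold canonDist
    split_ifs with h
    · exact hSpos
    · refine csInf_le_csInf ⟨0, fun l hl => (hLpos _ hl.1).le⟩ hSne ?_
      intro l hl
      exact ⟨hl.1, chainComp_eq_of_dist_le hl.2⟩
  refine ⟨key, fun δ => ?_⟩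
  obtain ⟨l₀, hl₀, hδ⟩ := hLsup δ
  refine ⟨l₀, fun x y hxy => ?_⟩
  calc canonDist L x y ≤ sInf {l | l ∈ L ∧ dist x y ≤ l} := key x y
    _ ≤ l₀ := csInf_le ⟨0, fun l hl => (hLpos _ hl.1).le⟩ ⟨hl₀, hxy.trans hδ⟩
end

section
/- Let S and T be pruned towers and f : Lev(S) → Lev(T) a monotone map such that Deg_λ^{λ+1}(S) ≤ deg_{f(λ)}^{f(λ+1)}(T) for each non-maximal level λ of S. Then there exists a monotone level-preserving injective map (tower embedding) φ : S → T with induced level map equal to f. -/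
universe u v


section TowerAuxLemmas

variable {α : Type u}

theorem towerIntEq [PartialOrder α]
    (lev : α → ℤ)
    (hlev : ∀ a b : α, a ≤ b → lev a ≤ lev b ∧ (Set.Icc a b).ncard = (lev b - lev a).toNat + 1)
    {a b : α} (hab : a ≤ b) (h : lev a = lev b) : a = b := by
  have h2 := (hlev a b hab).2
  rw [h, sub_self] at h2
  simp only [Int.toNat_zero, zero_add] at h2
  obtain ⟨c, hc⟩ := Set.ncard_eq_one.mp h2
  have ha : a ∈ Set.Icc a b := ⟨le_rfl, hab⟩
  have hb : b ∈ Set.Icc a b := ⟨hab, le_rfl⟩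
  rw [hc, Set.mem_singleton_iff] at ha hb
  rw [ha, hb]

theorem towerIntMono [PartialOrder α]
    (hfin : ∀ x y : α, (Set.Icc x y).Finite)
    (lev : α → ℤ)
    (hlev : ∀ a b : α, a ≤ b → lev a ≤ lev b ∧ (Set.Icc a b).ncard = (lev b - lev a).toNat + 1)
    {a b : α} (hab : a < b) : lev a < lev b := by
  have h1 := (hlev a b hab.le).1
  have h2 := (hlev a b hab.le).2
  have hsub : ({a, b} : Set α) ⊆ Set.Icc a b := by
    rw [Set.insert_subset_iff, Set.singleton_subset_iff]
    exact ⟨⟨le_rfl, hab.le⟩, ⟨hab.le, le_rfl⟩⟩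
  have hp : ({a, b} : Set α).ncard = 2 := Set.ncard_pair hab.ne
  have h3 := Set.ncard_le_ncard hsub (hfin a b)
  omega

theorem towerIntFull [PartialOrder α]
    (hfin : ∀ x y : α, (Set.Icc x y).Finite)
    (hlin : ∀ x y : α, ∀ a ∈ Set.Icc x y, ∀ b ∈ Set.Icc x y, a ≤ b ∨ b ≤ a)
    (lev : α → ℤ)
    (hlev : ∀ a b : α, a ≤ b → lev a ≤ lev b ∧ (Set.Icc a b).ncard = (lev b - lev a).toNat + 1)
    {a b : α} (hab : a ≤ b) {m : ℤ} (h1 : lev a ≤ m) (h2 : m ≤ lev b) :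
    ∃ c, a ≤ c ∧ c ≤ b ∧ lev c = m := by
  have hinj : Set.InjOn lev (Set.Icc a b) := by
    intro x hx y hy hxy
    rcases hlin a b x hx y hy with h | h
    · exact towerIntEq lev hlev h hxy
    · exact (towerIntEq lev hlev h hxy.symm).symm
  have himg : lev '' Set.Icc a b ⊆ Set.Icc (lev a) (lev b) := by
    rintro _ ⟨x, hx, rfl⟩
    exact ⟨(hlev a x hx.1).1, (hlev x b hx.2).1⟩
  have hle : lev a ≤ lev b := le_trans h1 h2
  have hIcc : (Set.Icc (lev a) (lev b)).ncard = (lev b - lev a).toNat + 1 := by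
    rw [← Finset.coe_Icc, Set.ncard_coe_finset, Int.card_Icc]
    omega
  have hcard : (Set.Icc (lev a) (lev b)).ncard ≤ (lev '' Set.Icc a b).ncard := by
    rw [Set.ncard_image_of_injOn hinj, (hlev a b hab).2, hIcc]
  have heq := Set.eq_of_subset_of_ncard_le himg hcard (Set.finite_Icc _ _)
  have hm : m ∈ lev '' Set.Icc a b := by
    rw [heq]
    exact ⟨h1, h2⟩
  obtain ⟨c, hc, rfl⟩ := hm
  exact ⟨c, hc.1, hc.2, rfl⟩

theorem towerIntComp [PartialOrder α]
    (hdir : ∀ x y : α, ∃ z : α, x ≤ z ∧ y ≤ z)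
    (hlin : ∀ x y : α, ∀ a ∈ Set.Icc x y, ∀ b ∈ Set.Icc x y, a ≤ b ∨ b ≤ a)
    {s z z' : α} (h1 : s ≤ z) (h2 : s ≤ z') : z ≤ z' ∨ z' ≤ z := by
  obtain ⟨w, hw1, hw2⟩ := hdir z z'
  exact hlin s w z ⟨h1, hw1⟩ z' ⟨h2, hw2⟩

theorem towerIntAnc [PartialOrder α]
    (hdir : ∀ x y : α, ∃ z : α, x ≤ z ∧ y ≤ z)
    (hfin : ∀ x y : α, (Set.Icc x y).Finite)
    (hlin : ∀ x y : α, ∀ a ∈ Set.Icc x y, ∀ b ∈ Set.Icc x y, a ≤ b ∨ b ≤ a)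
    (lev : α → ℤ)
    (hlev : ∀ a b : α, a ≤ b → lev a ≤ lev b ∧ (Set.Icc a b).ncard = (lev b - lev a).toNat + 1)
    {s : α} {ℓ : ℤ} (h1 : ℓ ∈ Set.range lev) (h2 : lev s ≤ ℓ) :
    ∃ z, s ≤ z ∧ lev z = ℓ := by
  obtain ⟨y, rfl⟩ := h1
  obtain ⟨w, hw1, hw2⟩ := hdir s y
  obtain ⟨c, hc1, _, hc3⟩ := towerIntFull hfin hlin lev hlev hw1 h2 ((hlev y w hw2).1)
  exact ⟨c, hc1, hc3⟩

theorem towerIntRange [PartialOrder α]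
    (hdir : ∀ x y : α, ∃ z : α, x ≤ z ∧ y ≤ z)
    (hfin : ∀ x y : α, (Set.Icc x y).Finite)
    (hlin : ∀ x y : α, ∀ a ∈ Set.Icc x y, ∀ b ∈ Set.Icc x y, a ≤ b ∨ b ≤ a)
    (lev : α → ℤ)
    (hlev : ∀ a b : α, a ≤ b → lev a ≤ lev b ∧ (Set.Icc a b).ncard = (lev b - lev a).toNat + 1)
    {a b c : ℤ} (ha : a ∈ Set.range lev) (hb : b ∈ Set.range lev)
    (h1 : a ≤ c) (h2 : c ≤ b) : c ∈ Set.range lev := by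
  obtain ⟨x, rfl⟩ := ha
  obtain ⟨y, rfl⟩ := hb
  obtain ⟨w, hw1, hw2⟩ := hdir x y
  obtain ⟨d, _, _, hd⟩ := towerIntFull hfin hlin lev hlev hw1 h1 (le_trans h2 (hlev y w hw2).1)
  exact ⟨d, hd⟩

end TowerAuxLemmas

open Classical in
/-- The swap-adjusted one-step placement map used in the tower embedding construction. -/
noncomputable def towerStep {S : Type u} {T : Type v} [PartialOrder S]
    (lev : S → ℤ) (x0 : S) (anc : S → ℤ → S) (B : ℤ → T) (g' : S → T → S → T)
    (a : S) (t : T) (s : S) : T :=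
  if x0 ≤ anc x0 (lev a - 1) ∧ anc x0 (lev a - 1) ≤ a ∧ lev (anc x0 (lev a - 1)) = lev a - 1 then
    Equiv.swap (g' a t (anc x0 (lev a - 1))) (B (lev a - 1)) (g' a t s)
  else g' a t s

open Classical in
/-- Recursion along distance to the reference chain, used to define the tower embedding. -/
noncomputable def towerRec {S : Type u} {T : Type v} (inCh : S → Prop) (chain : S → T)
    (par : S → S) (step : S → T → S → T) : ℕ → S → T
  | 0, s => chain s
  | n+1, s => if inCh s then chain s else
      step (par s) (towerRec inCh chain par step n (par s)) s



/-- Let `S`, `T` be pruned towers (↑-directed posets with finite linearly ordered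
intervals, with level functions `levS`, `levT` into `ℤ`, in which every element has
predecessors at every lower level), and let `f` be a monotone map from the levels of
`S` to the levels of `T`. If for every non-maximal level `λ` of `S` (with successor
`μ = λ+1`) we have `Deg_λ^{λ+1}(S) ≤ deg_{f(λ)}^{f(λ+1)}(T)` (every element of `S` at
level `λ+1` has at most as many predecessors at level `λ` as any element of `T` at
level `f(λ+1)` has at level `f(λ)`), then there is a tower embedding `φ : S → T`
(an injective monotone map) whose induced level map is `f`. -/
theorem tower_embedding_exists {S : Type u} {T : Type v} [PartialOrder S] [PartialOrder T]
    (hdirS : ∀ x y : S, ∃ z : S, x ≤ z ∧ y ≤ z)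
    (hfinS : ∀ x y : S, (Set.Icc x y).Finite)
    (hlinS : ∀ x y : S, ∀ a ∈ Set.Icc x y, ∀ b ∈ Set.Icc x y, a ≤ b ∨ b ≤ a)
    (hdirT : ∀ x y : T, ∃ z : T, x ≤ z ∧ y ≤ z)
    (hfinT : ∀ x y : T, (Set.Icc x y).Finite)
    (hlinT : ∀ x y : T, ∀ a ∈ Set.Icc x y, ∀ b ∈ Set.Icc x y, a ≤ b ∨ b ≤ a)
    (levS : S → ℤ) (levT : T → ℤ)
    (hlevS : ∀ a b : S, a ≤ b →
      levS a ≤ levS b ∧ (Set.Icc a b).ncard = (levS b - levS a).toNat + 1)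
    (hlevT : ∀ a b : T, a ≤ b →
      levT a ≤ levT b ∧ (Set.Icc a b).ncard = (levT b - levT a).toNat + 1)
    (hprunedS : ∀ s : S, ∀ ℓ ∈ Set.range levS, ℓ < levS s → ∃ p : S, p ≤ s ∧ levS p = ℓ)
    (hprunedT : ∀ t : T, ∀ ℓ ∈ Set.range levT, ℓ < levT t → ∃ p : T, p ≤ t ∧ levT p = ℓ)
    (f : ℤ → ℤ)
    (hfmap : ∀ a ∈ Set.range levS, f a ∈ Set.range levT)
    (hfmono : ∀ a ∈ Set.range levS, ∀ b ∈ Set.range levS, a < b → f a < f b)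
    (hdeg : ∀ lam mu : ℤ, lam ∈ Set.range levS → mu ∈ Set.range levS → lam < mu →
      (∀ nu ∈ Set.range levS, ¬(lam < nu ∧ nu < mu)) →
      ∀ s : S, levS s = mu → ∀ t : T, levT t = f mu →
        Cardinal.lift.{v} (Cardinal.mk {p : S // p ≤ s ∧ levS p = lam}) ≤
          Cardinal.lift.{u} (Cardinal.mk {q : T // q ≤ t ∧ levT q = f lam})) :
    ∃ φ : S → T, Function.Injective φ ∧ (∀ a b : S, a < b → φ a < φ b) ∧
      ∀ s : S, levT (φ s) = f (levS s) := by
  classical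
  rcases isEmpty_or_nonempty S with hS | hS
  · exact ⟨fun s => (hS.false s).elim, fun a => (hS.false a).elim,
      fun a => (hS.false a).elim, fun s => (hS.false s).elim⟩
  -- basic structural lemmas
  have eqS : ∀ a b : S, a ≤ b → levS a = levS b → a = b :=
    fun a b h1 h2 => towerIntEq levS hlevS h1 h2
  have eqT : ∀ a b : T, a ≤ b → levT a = levT b → a = b :=
    fun a b h1 h2 => towerIntEq levT hlevT h1 h2
  have monoS : ∀ a b : S, a < b → levS a < levS b :=
    fun a b h => towerIntMono hfinS levS hlevS h
  have compS : ∀ s z z' : S, s ≤ z → s ≤ z' → z ≤ z' ∨ z' ≤ z :=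
    fun s z z' h1 h2 => towerIntComp hdirS hlinS h1 h2
  have compT : ∀ s z z' : T, s ≤ z → s ≤ z' → z ≤ z' ∨ z' ≤ z :=
    fun s z z' h1 h2 => towerIntComp hdirT hlinT h1 h2
  have rangeS : ∀ a b c : ℤ, a ∈ Set.range levS → b ∈ Set.range levS → a ≤ c → c ≤ b →
      c ∈ Set.range levS :=
    fun a b c ha hb h1 h2 => towerIntRange hdirS hfinS hlinS levS hlevS ha hb h1 h2
  have sameLevS : ∀ s z z' : S, s ≤ z → s ≤ z' → levS z = levS z' → z = z' := by
    intro s z z' h1 h2 h3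
    rcases compS s z z' h1 h2 with h | h
    · exact eqS _ _ h h3
    · exact (eqS _ _ h h3.symm).symm
  -- choice of ancestors
  have hancS' : ∀ (s : S) (ℓ : ℤ), ∃ z : S,
      ℓ ∈ Set.range levS → levS s ≤ ℓ → s ≤ z ∧ levS z = ℓ := by
    intro s ℓ
    by_cases h : ℓ ∈ Set.range levS ∧ levS s ≤ ℓ
    · obtain ⟨z, hz1, hz2⟩ := towerIntAnc hdirS hfinS hlinS levS hlevS h.1 h.2
      exact ⟨z, fun _ _ => ⟨hz1, hz2⟩⟩
    · exact ⟨s, fun h1 h2 => absurd ⟨h1, h2⟩ h⟩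
  choose ancS hancS using hancS'
  have hancT' : ∀ (t : T) (ℓ : ℤ), ∃ z : T,
      ℓ ∈ Set.range levT → levT t ≤ ℓ → t ≤ z ∧ levT z = ℓ := by
    intro t ℓ
    by_cases h : ℓ ∈ Set.range levT ∧ levT t ≤ ℓ
    · obtain ⟨z, hz1, hz2⟩ := towerIntAnc hdirT hfinT hlinT levT hlevT h.1 h.2
      exact ⟨z, fun _ _ => ⟨hz1, hz2⟩⟩
    · exact ⟨t, fun h1 h2 => absurd ⟨h1, h2⟩ h⟩
  choose ancT hancT using hancT'
  -- base point and its image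
  obtain ⟨x0⟩ := hS
  obtain ⟨t0, ht0⟩ := hfmap (levS x0) ⟨x0, rfl⟩
  have fmono' : ∀ a b : ℤ, a ∈ Set.range levS → b ∈ Set.range levS → a ≤ b → f a ≤ f b := by
    intro a b ha hb h
    rcases eq_or_lt_of_le h with rfl | h'
    · exact le_rfl
    · exact (hfmono a ha b hb h').le
  have hCH : ∀ ℓ : ℤ, ℓ ∈ Set.range levS → levS x0 ≤ ℓ →
      t0 ≤ ancT t0 (f ℓ) ∧ levT (ancT t0 (f ℓ)) = f ℓ := by
    intro ℓ h1 h2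
    exact hancT t0 (f ℓ) (hfmap ℓ h1) (by rw [ht0]; exact fmono' _ _ ⟨x0, rfl⟩ h1 h2)
  -- the injections given by the degree hypothesis
  have hgex : ∀ (a : S) (t : T), (levS a - 1 ∈ Set.range levS) → (levT t = f (levS a)) →
      ∃ gg : {c : S // c ≤ a ∧ levS c = levS a - 1} →
        {q : T // q ≤ t ∧ levT q = f (levS a - 1)}, Function.Injective gg := by
    intro a t h1 h2
    have hle := hdeg (levS a - 1) (levS a) h1 ⟨a, rfl⟩ (by omega)
      (fun nu _ hnu => by omega) a rfl t h2
    obtain ⟨e⟩ := Cardinal.lift_mk_le'.mp hle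
    exact ⟨e, e.injective⟩
  choose gfun hg using hgex
  have hg'ex : ∀ (a : S) (t : T) (c : S), ∃ q : T,
      ∀ (h1 : levS a - 1 ∈ Set.range levS) (h2 : levT t = f (levS a))
        (h3 : c ≤ a) (h4 : levS c = levS a - 1),
        q = (gfun a t h1 h2 ⟨c, h3, h4⟩).val := by
    intro a t c
    by_cases h : (levS a - 1 ∈ Set.range levS) ∧ (levT t = f (levS a)) ∧
        c ≤ a ∧ levS c = levS a - 1
    · exact ⟨(gfun a t h.1 h.2.1 ⟨c, h.2.2.1, h.2.2.2⟩).val, fun _ _ _ _ => rfl⟩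
    · exact ⟨t, fun h1 h2 h3 h4 => absurd ⟨h1, h2, h3, h4⟩ h⟩
  choose g' hg'' using hg'ex
  have hg'spec : ∀ (a : S) (t : T) (c : S), (levS a - 1 ∈ Set.range levS) →
      (levT t = f (levS a)) → c ≤ a → levS c = levS a - 1 →
      ((g' a t c ≤ t ∧ levT (g' a t c) = f (levS a - 1)) ∧
        ∀ c', c' ≤ a → levS c' = levS a - 1 → g' a t c = g' a t c' → c = c') := by
    intro a t c h1 h2 h3 h4
    have e1 := hg'' a t c h1 h2 h3 h4
    constructor
    · rw [e1]; exact (gfun a t h1 h2 ⟨c, h3, h4⟩).2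
    · intro c' h3' h4' he
      have e2 := hg'' a t c' h1 h2 h3' h4'
      rw [e1, e2] at he
      have := hg a t h1 h2 (Subtype.ext he)
      exact congrArg Subtype.val this
  -- the parent function
  obtain ⟨par, hpar⟩ : ∃ par : S → S, ∀ s : S, levS s + 1 ∈ Set.range levS →
      s ≤ par s ∧ levS (par s) = levS s + 1 :=
    ⟨fun s => ancS s (levS s + 1), fun s hr => hancS s (levS s + 1) hr (by omega)⟩
  have NC : ∀ s : S, ¬ x0 ≤ s → levS s + 1 ∈ Set.range levS := by
    intro s h
    obtain ⟨z, hz1, hz2⟩ := hdirS s x0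
    have hne : s ≠ z := fun he => h (he ▸ hz2)
    have := monoS s z (lt_of_le_of_ne hz1 hne)
    exact rangeS (levS s) (levS z) (levS s + 1) ⟨s, rfl⟩ ⟨z, rfl⟩ (by omega) (by omega)
  -- the distance-to-chain function
  have Hd : ∀ s : S, ∃ n : ℕ, ∃ z : S, s ≤ z ∧ x0 ≤ z ∧ levS z = levS s + n := by
    intro s
    obtain ⟨z, hz1, hz2⟩ := hdirS s x0
    exact ⟨(levS z - levS s).toNat, z, hz1, hz2, by have := (hlevS s z hz1).1; omega⟩
  obtain ⟨δ, hδ0, hδ1⟩ : ∃ δ : S → ℕ, (∀ s : S, x0 ≤ s → δ s = 0) ∧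
      (∀ s : S, ¬ x0 ≤ s → δ (par s) < δ s) := by
    refine ⟨fun s => Nat.find (Hd s), fun s h => ?_, fun s h => ?_⟩
    · show Nat.find (Hd s) = 0
      rw [Nat.find_eq_zero]
      exact ⟨s, le_rfl, h, by simp⟩
    · obtain ⟨z, hz1, hz2, hz3⟩ := Nat.find_spec (Hd s)
      have hne0 : Nat.find (Hd s) ≠ 0 := by
        intro h0
        rw [h0] at hz3
        have hzs : s = z := eqS s z hz1 (by omega)
        exact h (hzs ▸ hz2)
      have hr : levS s + 1 ∈ Set.range levS := NC s h
      obtain ⟨hp1, hp2⟩ := hpar s hr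
      have hpz : par s ≤ z := by
        rcases compS s (par s) z hp1 hz1 with h' | h'
        · exact h'
        · have hle := (hlevS z (par s) h').1
          have : z = par s := eqS z (par s) h' (by omega)
          exact this ▸ le_rfl
      have hfind : Nat.find (Hd (par s)) ≤ Nat.find (Hd s) - 1 :=
        Nat.find_le ⟨z, hpz, hz2, by omega⟩
      show Nat.find (Hd (par s)) < Nat.find (Hd s)
      omega
  -- construction of φ
  obtain ⟨φ, hφC, hφS⟩ :
      ∃ φ : S → T,
        (∀ s : S, x0 ≤ s → φ s = ancT t0 (f (levS s))) ∧
        (∀ s : S, ¬ x0 ≤ s →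
          φ s = towerStep levS x0 ancS (fun ℓ => ancT t0 (f ℓ)) g' (par s) (φ (par s)) s) := by
    set st := towerStep levS x0 ancS (fun ℓ => ancT t0 (f ℓ)) g' with hst
    set ch : S → T := fun s => ancT t0 (f (levS s)) with hch
    have stab : ∀ n (s : S), δ s ≤ n →
        towerRec (fun s => x0 ≤ s) ch par st n s =
        towerRec (fun s => x0 ≤ s) ch par st (δ s) s := by
      intro n
      induction n using Nat.strong_induction_on with
      | _ n ih =>
        intro s hns
        by_cases hc : x0 ≤ s
        · rw [hδ0 s hc]
          cases n with
          | zero => rfl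
          | succ m => simp [towerRec, hc]
        · have hlt := hδ1 s hc
          obtain ⟨k, hk⟩ : ∃ k, δ s = k + 1 := ⟨δ s - 1, by omega⟩
          cases n with
          | zero => omega
          | succ m =>
            rw [hk]
            simp only [towerRec, if_neg hc]
            rw [ih m (by omega) (par s) (by omega), ih k (by omega) (par s) (by omega)]
    refine ⟨fun s => towerRec (fun s => x0 ≤ s) ch par st (δ s) s, fun s h => ?_, fun s h => ?_⟩
    · show towerRec (fun s => x0 ≤ s) ch par st (δ s) s = ancT t0 (f (levS s))
      rw [hδ0 s h]
      rfl
    · have hlt := hδ1 s h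
      obtain ⟨k, hk⟩ : ∃ k, δ s = k + 1 := ⟨δ s - 1, by omega⟩
      show towerRec (fun s => x0 ≤ s) ch par st (δ s) s = _
      rw [hk]
      simp only [towerRec, if_neg h]
      rw [stab k (par s) (by omega)]
  -- main level/monotonicity invariant
  have PQ : ∀ n (s : S), δ s = n →
      levT (φ s) = f (levS s) ∧
      (levS s + 1 ∈ Set.range levS → φ s < φ (par s)) := by
    intro n
    induction n using Nat.strong_induction_on with
    | _ n ih =>
      intro s hδs
      by_cases hc : x0 ≤ s
      · have hφs := hφC s hc
        have hx0s := (hlevS x0 s hc).1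
        have hs1 := hCH (levS s) ⟨s, rfl⟩ hx0s
        constructor
        · rw [hφs]; exact hs1.2
        · intro hr
          obtain ⟨hp1, hp2⟩ := hpar s hr
          have hcp : x0 ≤ par s := le_trans hc hp1
          have hφp := hφC (par s) hcp
          have hs2 := hCH (levS s + 1) hr (by omega)
          have hflt : f (levS s) < f (levS s + 1) := hfmono _ ⟨s, rfl⟩ _ hr (by omega)
          rw [hφs, hφp, hp2]
          rcases compT t0 _ _ hs1.1 hs2.1 with h' | h'
          · refine lt_of_le_of_ne h' ?_
            intro he
            have := congrArg levT he
            rw [hs1.2, hs2.2] at this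
            omega
          · exfalso
            have := (hlevT _ _ h').1
            rw [hs1.2, hs2.2] at this
            omega
      · have hr : levS s + 1 ∈ Set.range levS := NC s hc
        obtain ⟨hp1, hp2⟩ := hpar s hr
        have hδp : δ (par s) < n := hδs ▸ hδ1 s hc
        have Pa : levT (φ (par s)) = f (levS (par s)) := (ih (δ (par s)) hδp (par s) rfl).1
        have hφs := hφS s hc
        have h1 : levS (par s) - 1 ∈ Set.range levS := by
          have he : levS (par s) - 1 = levS s := by omega
          rw [he]; exact ⟨s, rfl⟩
        have hs3 : levS s = levS (par s) - 1 := by omega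
        have hgm := (hg'spec (par s) (φ (par s)) s h1 Pa hp1 hs3).1
        have hflt : f (levS s) < f (levS (par s)) := hfmono _ ⟨s, rfl⟩ _ ⟨par s, rfl⟩ (by omega)
        by_cases hsw : x0 ≤ ancS x0 (levS (par s) - 1) ∧ ancS x0 (levS (par s) - 1) ≤ par s ∧
            levS (ancS x0 (levS (par s) - 1)) = levS (par s) - 1
        · -- swap branch
          have hstep : φ s = Equiv.swap (g' (par s) (φ (par s)) (ancS x0 (levS (par s) - 1)))
              (ancT t0 (f (levS (par s) - 1))) (g' (par s) (φ (par s)) s) := by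
            rw [hφs]
            simp only [towerStep]
            rw [if_pos hsw]
          have hx0cc := (hlevS x0 _ hsw.1).1
          have hxle : levS x0 ≤ levS (par s) - 1 := by
            have := hsw.2.2
            omega
          have hx0p : x0 < par s :=
            lt_of_le_of_ne (le_trans hsw.1 hsw.2.1)
              (fun he => by rw [he] at hxle; omega)
          have hφp := hφC (par s) hx0p.le
          have hccm := (hg'spec (par s) (φ (par s)) (ancS x0 (levS (par s) - 1))
            h1 Pa hsw.2.1 hsw.2.2).1
          have hB := hCH (levS (par s) - 1) h1 hxle
          have hBt : ancT t0 (f (levS (par s) - 1)) ≤ φ (par s) := by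
            have ht0p : t0 ≤ φ (par s) := by
              rw [hφp]
              exact (hCH (levS (par s)) ⟨par s, rfl⟩ (hlevS x0 _ hx0p.le).1).1
            rcases compT t0 _ _ hB.1 ht0p with h' | h'
            · exact h'
            · have hle2 := (hlevT _ _ h').1
              rw [Pa, hB.2] at hle2
              have := hfmono _ h1 _ ⟨par s, rfl⟩ (by omega)
              omega
          have hout : φ s = g' (par s) (φ (par s)) (ancS x0 (levS (par s) - 1)) ∨
              φ s = ancT t0 (f (levS (par s) - 1)) ∨
              φ s = g' (par s) (φ (par s)) s := by
            rw [hstep]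
            by_cases h1' : g' (par s) (φ (par s)) s =
                g' (par s) (φ (par s)) (ancS x0 (levS (par s) - 1))
            · right; left; rw [h1', Equiv.swap_apply_left]
            · by_cases h2' : g' (par s) (φ (par s)) s = ancT t0 (f (levS (par s) - 1))
              · left; rw [h2', Equiv.swap_apply_right]
              · right; right; rw [Equiv.swap_apply_of_ne_of_ne h1' h2']
          have hlev : levT (φ s) = f (levS s) := by
            rcases hout with h | h | h <;> rw [h, hs3]
            · exact hccm.2
            · exact hB.2
            · exact hgm.2
          have hle : φ s ≤ φ (par s) := by
            rcases hout with h | h | h <;> rw [h]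
            exacts [hccm.1, hBt, hgm.1]
          refine ⟨hlev, fun _ => lt_of_le_of_ne hle ?_⟩
          intro he
          rw [he, Pa] at hlev
          omega
        · -- plain branch
          have hstep : φ s = g' (par s) (φ (par s)) s := by
            rw [hφs]
            simp only [towerStep]
            rw [if_neg hsw]
          have hlev : levT (φ s) = f (levS s) := by rw [hstep, hs3]; exact hgm.2
          refine ⟨hlev, fun _ => lt_of_le_of_ne (hstep ▸ hgm.1) ?_⟩
          intro he
          rw [he, Pa] at hlev
          omega
  have Pfull : ∀ s : S, levT (φ s) = f (levS s) := fun s => (PQ (δ s) s rfl).1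
  have Q : ∀ s : S, levS s + 1 ∈ Set.range levS → φ s < φ (par s) :=
    fun s hr => (PQ (δ s) s rfl).2 hr
  -- siblings get distinct images
  have hpeq : ∀ (p c : S), ¬ x0 ≤ c → c ≤ p → levS c = levS p - 1 → par c = p := by
    intro p c hc hcp hlc
    have hr : levS c + 1 ∈ Set.range levS := by
      have he : levS c + 1 = levS p := by omega
      rw [he]; exact ⟨p, rfl⟩
    obtain ⟨h1, h2⟩ := hpar c hr
    exact sameLevS c (par c) p h1 hcp (by omega)
  have SIB : ∀ (p c1 c2 : S), c1 ≤ p → c2 ≤ p → levS c1 = levS p - 1 → levS c2 = levS p - 1 →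
      φ c1 = φ c2 → c1 = c2 := by
    have key : ∀ (p c1 c2 : S), x0 ≤ c1 → ¬ x0 ≤ c2 → c1 ≤ p → c2 ≤ p →
        levS c1 = levS p - 1 → levS c2 = levS p - 1 → φ c1 ≠ φ c2 := by
      intro p c1 c2 h1 h2 hc1 hc2 hl1 hl2 he
      have hpe := hpeq p c2 h2 hc2 hl2
      have hφ2 := hφS c2 h2
      rw [hpe] at hφ2
      have hrr : levS p - 1 ∈ Set.range levS := ⟨c1, hl1⟩
      have hswp : x0 ≤ ancS x0 (levS p - 1) ∧ ancS x0 (levS p - 1) ≤ p ∧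
          levS (ancS x0 (levS p - 1)) = levS p - 1 := by
        have hxl : levS x0 ≤ levS p - 1 := by
          have := (hlevS x0 c1 h1).1; omega
        obtain ⟨q1, q2⟩ := hancS x0 (levS p - 1) hrr hxl
        refine ⟨q1, ?_, q2⟩
        have hx0p : x0 ≤ p := le_trans h1 hc1
        rcases compS x0 (ancS x0 (levS p - 1)) p q1 hx0p with h' | h'
        · exact h'
        · exfalso
          have := (hlevS p _ h').1
          omega
      have hcc : ancS x0 (levS p - 1) = c1 :=
        sameLevS x0 _ _ hswp.1 h1 (by have := hswp.2.2; omega)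
      have Pp := Pfull p
      have hstep : φ c2 = Equiv.swap (g' p (φ p) (ancS x0 (levS p - 1)))
          (ancT t0 (f (levS p - 1))) (g' p (φ p) c2) := by
        rw [hφ2]
        simp only [towerStep]
        rw [if_pos hswp]
      have hφ1 : φ c1 = ancT t0 (f (levS p - 1)) := by
        rw [hφC c1 h1, hl1]
      have hswe : Equiv.swap (g' p (φ p) (ancS x0 (levS p - 1)))
          (ancT t0 (f (levS p - 1))) (g' p (φ p) c2) =
          Equiv.swap (g' p (φ p) (ancS x0 (levS p - 1)))
          (ancT t0 (f (levS p - 1))) (g' p (φ p) (ancS x0 (levS p - 1))) := by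
        rw [Equiv.swap_apply_left, ← hstep, ← he, hφ1]
      have hvA := (Equiv.swap _ _).injective hswe
      have := (hg'spec p (φ p) c2 hrr Pp hc2 (by omega)).2 _ hswp.2.1 hswp.2.2 hvA
      rw [this, hcc] at h2
      exact h2 h1
    intro p c1 c2 hc1 hc2 hl1 hl2 he
    by_cases h1 : x0 ≤ c1 <;> by_cases h2 : x0 ≤ c2
    · exact sameLevS x0 c1 c2 h1 h2 (by omega)
    · exact absurd he (key p c1 c2 h1 h2 hc1 hc2 hl1 hl2)
    · exact absurd he.symm (key p c2 c1 h2 h1 hc2 hc1 hl2 hl1)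
    · have hpe1 := hpeq p c1 h1 hc1 hl1
      have hpe2 := hpeq p c2 h2 hc2 hl2
      have hφ1 := hφS c1 h1
      rw [hpe1] at hφ1
      have hφ2 := hφS c2 h2
      rw [hpe2] at hφ2
      have Pp := Pfull p
      have hrr : levS p - 1 ∈ Set.range levS := by
        have he' : levS p - 1 = levS c1 := by omega
        rw [he']; exact ⟨c1, rfl⟩
      by_cases hswp : x0 ≤ ancS x0 (levS p - 1) ∧ ancS x0 (levS p - 1) ≤ p ∧
          levS (ancS x0 (levS p - 1)) = levS p - 1
      · have hstep1 : φ c1 = Equiv.swap (g' p (φ p) (ancS x0 (levS p - 1)))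
            (ancT t0 (f (levS p - 1))) (g' p (φ p) c1) := by
          rw [hφ1]; simp only [towerStep]; rw [if_pos hswp]
        have hstep2 : φ c2 = Equiv.swap (g' p (φ p) (ancS x0 (levS p - 1)))
            (ancT t0 (f (levS p - 1))) (g' p (φ p) c2) := by
          rw [hφ2]; simp only [towerStep]; rw [if_pos hswp]
        rw [hstep1, hstep2] at he
        have := (Equiv.swap _ _).injective he
        exact (hg'spec p (φ p) c1 hrr Pp hc1 (by omega)).2 c2 hc2 (by omega) this
      · have hstep1 : φ c1 = g' p (φ p) c1 := by
          rw [hφ1]; simp only [towerStep]; rw [if_neg hswp]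
        have hstep2 : φ c2 = g' p (φ p) c2 := by
          rw [hφ2]; simp only [towerStep]; rw [if_neg hswp]
        rw [hstep1, hstep2] at he
        exact (hg'spec p (φ p) c1 hrr Pp hc1 (by omega)).2 c2 hc2 (by omega) he
  -- monotonicity
  have mono : ∀ n (a b : S), a < b → (levS b - levS a).toNat = n → φ a < φ b := by
    intro n
    induction n using Nat.strong_induction_on with
    | _ n ih =>
      intro a b hab hn
      have hlt := monoS a b hab
      have hr : levS a + 1 ∈ Set.range levS :=
        rangeS (levS a) (levS b) (levS a + 1) ⟨a, rfl⟩ ⟨b, rfl⟩ (by omega) (by omega)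
      obtain ⟨hp1, hp2⟩ := hpar a hr
      have hQ := Q a hr
      rcases compS a (par a) b hp1 hab.le with h' | h'
      · rcases eq_or_lt_of_le h' with he | h''
        · exact he ▸ hQ
        · exact lt_trans hQ (ih (levS b - levS (par a)).toNat (by omega) (par a) b h'' rfl)
      · have hle2 := (hlevS b (par a) h').1
        have heq : b = par a := eqS b (par a) h' (by omega)
        rw [heq]
        exact hQ
  -- injectivity
  have inj : ∀ n (z a b : S), a ≤ z → b ≤ z → (levS z - levS a).toNat = n → φ a = φ b →
      a = b := by
    intro n
    induction n using Nat.strong_induction_on with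
    | _ n ih =>
      intro z a b haz hbz hn he
      have hlab : levS a = levS b := by
        have h1 := Pfull a
        have h2 := Pfull b
        rw [he] at h1
        have hf : f (levS a) = f (levS b) := by rw [← h1, h2]
        rcases lt_trichotomy (levS a) (levS b) with h | h | h
        · exact absurd hf (ne_of_lt (hfmono _ ⟨a, rfl⟩ _ ⟨b, rfl⟩ h))
        · exact h
        · exact absurd hf.symm (ne_of_lt (hfmono _ ⟨b, rfl⟩ _ ⟨a, rfl⟩ h))
      have h1 := (hlevS a z haz).1
      rcases Nat.eq_zero_or_pos n with rfl | hpos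
      · have haz' : a = z := eqS a z haz (by omega)
        have hbz' : b = z := eqS b z hbz (by omega)
        rw [haz', hbz']
      · have hr : levS a + 1 ∈ Set.range levS :=
          rangeS (levS a) (levS z) (levS a + 1) ⟨a, rfl⟩ ⟨z, rfl⟩ (by omega) (by omega)
        have hrb : levS b + 1 ∈ Set.range levS := by rw [← hlab]; exact hr
        obtain ⟨ha1, ha2⟩ := hpar a hr
        obtain ⟨hb1, hb2⟩ := hpar b hrb
        have hQa := Q a hr
        have hQb := Q b hrb
        have hpp : φ (par a) = φ (par b) := by
          have c1 : φ a ≤ φ (par a) := hQa.le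
          have c2 : φ a ≤ φ (par b) := by rw [he]; exact hQb.le
          have hlev2 : levT (φ (par a)) = levT (φ (par b)) := by
            rw [Pfull, Pfull, ha2, hb2, hlab]
          rcases compT (φ a) _ _ c1 c2 with h' | h'
          · exact eqT _ _ h' hlev2
          · exact (eqT _ _ h' hlev2.symm).symm
        have hpaz : par a ≤ z := by
          rcases compS a (par a) z ha1 haz with h' | h'
          · exact h'
          · have := (hlevS z (par a) h').1
            have hez : z = par a := eqS z (par a) h' (by omega)
            exact hez ▸ le_rfl
        have hpbz : par b ≤ z := by
          rcases compS b (par b) z hb1 hbz with h' | h'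
          · exact h'
          · have := (hlevS z (par b) h').1
            have hez : z = par b := eqS z (par b) h' (by omega)
            exact hez ▸ le_rfl
        have hppe : par a = par b :=
          ih (levS z - levS (par a)).toNat (by omega) z (par a) (par b) hpaz hpbz rfl hpp
        refine SIB (par a) a b ha1 ?_ (by omega) (by omega) he
        rw [hppe]
        exact hb1
  refine ⟨φ, ?_, ?_, Pfull⟩
  · intro a b he
    obtain ⟨z, hz1, hz2⟩ := hdirS a b
    exact inj (levS z - levS a).toNat z a b hz1 hz2 rfl he
  · intro a b h
    exact mono (levS b - levS a).toNat a b h rfl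
end
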